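/- For the case d = 0, the shuffle product (f1·f2)(x_1,...,x_{n+m}) = sum over shuffles of f1(x_I)·f2(x_J)·∏_{k,l}(x_{j_l}-x_{i_k})^{-1} (where the Vandermonde-type factor appears with exponent -1) makes the algebra supercommutative: for homogeneous symmetric polynomials f1 of degree k1 in n variables and f2 of degree k2 in m variables, f1·f2 = (-1)^{nm} f2·f1. -/

import Mathlib

/-!
Swapping the factors matches the shuffle `S` of `f1 · f2` with the shuffle `Sᶜ` of `f2 · f1`:
both terms evaluate `f1` and `f2` at the same increasingly ordered variables, and their
Vandermonde factors differ only in the orientation of each of the `n * m` differences, each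
reversal contributing a sign `-1` because the exponent `-1` is odd.
-/

namespace Stmt1

noncomputable section

lemma compl_card {n m : ℕ} (S : Finset (Fin (n + m))) (hS : S.card = n) :
    Sᶜ.card = m := by
  rw [Finset.card_compl, hS, Fintype.card_fin]
  omega

/-- The shuffle product with parameter `d` (exponent `d - 1 : ℤ` on the Vandermonde factors;
for `d = 0` this exponent is `-1`). -/
def shuffleMul (d : ℕ) {n m : ℕ} (f1 : (Fin n → ℚ) → ℚ) (f2 : (Fin m → ℚ) → ℚ) :
    (Fin (n + m) → ℚ) → ℚ := fun x =>
  ∑ S ∈ (Finset.powersetCard n (Finset.univ : Finset (Fin (n + m)))).attach,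
    f1 (fun a => x (S.1.orderEmbOfFin ((Finset.mem_powersetCard.mp S.2).2) a)) *
      f2 (fun b => x ((S.1)ᶜ.orderEmbOfFin
        (compl_card S.1 ((Finset.mem_powersetCard.mp S.2).2)) b)) *
      ∏ a : Fin n, ∏ b : Fin m,
        (x ((S.1)ᶜ.orderEmbOfFin (compl_card S.1 ((Finset.mem_powersetCard.mp S.2).2)) b) -
            x (S.1.orderEmbOfFin ((Finset.mem_powersetCard.mp S.2).2) a)) ^ ((d : ℤ) - 1)

lemma Finset.compl_map_equiv {α β : Type*} [Fintype α] [Fintype β] [DecidableEq α]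
    [DecidableEq β] (e : α ≃ β) (s : Finset α) :
    (s.map e.toEmbedding)ᶜ = sᶜ.map e.toEmbedding := by
  ext b
  simp [Finset.mem_map_equiv]

lemma Finset.orderEmbOfFin_of_eq_map {α β : Type*} [LinearOrder α] [LinearOrder β]
    (e : α ≃ β) (he : StrictMono e) {s : Finset α} {t : Finset β}
    (hst : t = s.map e.toEmbedding) {k : ℕ} (hs : s.card = k) (ht : t.card = k) (i : Fin k) :
    t.orderEmbOfFin ht i = e (s.orderEmbOfFin hs i) := by
  subst hst
  refine (congrFun (Finset.orderEmbOfFin_unique ht (f := fun j => e (s.orderEmbOfFin hs j))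
    (fun j => ?_) (he.comp (s.orderEmbOfFin hs).strictMono)) i).symm
  simp

lemma Finset.prod_prod_inv_sub_comm {K ι κ : Type*} [Field K] [Fintype ι] [Fintype κ]
    (P : ι → K) (Q : κ → K) :
    ∏ j, ∏ i, (P i - Q j)⁻¹ =
      (-1) ^ (Fintype.card ι * Fintype.card κ) * ∏ i, ∏ j, (Q j - P i)⁻¹ := by
  simp_rw [Finset.prod_comm (s := Finset.univ (α := κ)), ← neg_sub (Q _) (P _), inv_neg,
    Finset.prod_neg, Finset.prod_mul_distrib, Finset.prod_const, Finset.card_univ]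
  rw [← pow_mul, mul_comm (Fintype.card κ)]

/-- The term of the shuffle `S` (the positions of the variables of `f1`) in `shuffleMul`. -/
def shuffleTerm (d : ℕ) {n m : ℕ} (f1 : (Fin n → ℚ) → ℚ) (f2 : (Fin m → ℚ) → ℚ)
    (x : Fin (n + m) → ℚ) (S : Finset (Fin (n + m))) (hS : S.card = n) : ℚ :=
  f1 (fun a => x (S.orderEmbOfFin hS a)) *
    f2 (fun b => x (Sᶜ.orderEmbOfFin (compl_card S hS) b)) *
    ∏ a : Fin n, ∏ b : Fin m,
      (x (Sᶜ.orderEmbOfFin (compl_card S hS) b) - x (S.orderEmbOfFin hS a)) ^ ((d : ℤ) - 1)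

lemma shuffleMul_eq_sum_shuffleTerm (d : ℕ) {n m : ℕ} (f1 : (Fin n → ℚ) → ℚ)
    (f2 : (Fin m → ℚ) → ℚ) (x : Fin (n + m) → ℚ) :
    shuffleMul d f1 f2 x = ∑ S ∈ (Finset.powersetCard n Finset.univ).attach,
      shuffleTerm d f1 f2 x S.1 (Finset.mem_powersetCard.mp S.2).2 :=
  rfl

lemma shuffleTerm_zero_eq_neg_one_pow_mul {n m : ℕ} (f1 : (Fin n → ℚ) → ℚ)
    (f2 : (Fin m → ℚ) → ℚ) (x : Fin (n + m) → ℚ) (S : Finset (Fin (n + m)))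
    (hS : S.card = n)
    (hT : (Sᶜ.map (finCongr (Nat.add_comm m n)).symm.toEmbedding).card = m) :
    shuffleTerm 0 f1 f2 x S hS = (-1) ^ (n * m) *
      shuffleTerm 0 f2 f1 (fun i => x (finCongr (Nat.add_comm m n) i))
        (Sᶜ.map (finCongr (Nat.add_comm m n)).symm.toEmbedding) hT := by
  have hTc : (Sᶜ.map (finCongr (Nat.add_comm m n)).symm.toEmbedding)ᶜ =
      S.map (finCongr (Nat.add_comm m n)).symm.toEmbedding := by
    rw [Finset.compl_map_equiv, compl_compl]
  have hT_apply (b : Fin m) : finCongr (Nat.add_comm m n)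
      ((Sᶜ.map (finCongr (Nat.add_comm m n)).symm.toEmbedding).orderEmbOfFin hT b) =
        Sᶜ.orderEmbOfFin (compl_card S hS) b := by
    rw [Finset.orderEmbOfFin_of_eq_map (finCongr (Nat.add_comm m n)).symm
      (Fin.castOrderIso (Nat.add_comm m n)).symm.strictMono rfl (compl_card S hS)]
    exact Equiv.apply_symm_apply _ _
  have hTc_apply (a : Fin n) : finCongr (Nat.add_comm m n)
      ((Sᶜ.map (finCongr (Nat.add_comm m n)).symm.toEmbedding)ᶜ.orderEmbOfFin
        (compl_card _ hT) a) = S.orderEmbOfFin hS a := by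
    rw [Finset.orderEmbOfFin_of_eq_map (finCongr (Nat.add_comm m n)).symm
      (Fin.castOrderIso (Nat.add_comm m n)).symm.strictMono hTc hS]
    exact Equiv.apply_symm_apply _ _
  simp only [shuffleTerm, Nat.cast_zero, zero_sub, zpow_neg_one, hT_apply, hTc_apply]
  have hsign : ((-1 : ℚ) ^ (n * m)) * (-1) ^ (n * m) = 1 := by
    rw [← mul_pow, neg_one_mul, neg_neg, one_pow]
  rw [Finset.prod_prod_inv_sub_comm (fun a => x (S.orderEmbOfFin hS a)), Fintype.card_fin,
    Fintype.card_fin, mul_left_comm _ ((-1 : ℚ) ^ (n * m)), ← mul_assoc, hsign, one_mul,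
    mul_comm (f2 _)]

theorem stmt1_general {n m : ℕ}
    (f1 : (Fin n → ℚ) → ℚ) (f2 : (Fin m → ℚ) → ℚ)
    (x : Fin (n + m) → ℚ) :
    shuffleMul 0 f1 f2 x =
      (-1 : ℚ) ^ (n * m) *
        shuffleMul 0 f2 f1 (fun i => x (finCongr (Nat.add_comm m n) i)) := by
  set e := finCongr (Nat.add_comm m n)
  rw [shuffleMul_eq_sum_shuffleTerm, shuffleMul_eq_sum_shuffleTerm, Finset.mul_sum]
  refine Finset.sum_bij' (fun S _ => ⟨S.1ᶜ.map e.symm.toEmbedding, ?_⟩)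
    (fun T _ => ⟨T.1ᶜ.map e.toEmbedding, ?_⟩) (fun _ _ => Finset.mem_attach _ _)
    (fun _ _ => Finset.mem_attach _ _) (fun S _ => ?_) (fun T _ => ?_)
    (fun S _ => shuffleTerm_zero_eq_neg_one_pow_mul f1 f2 x S.1 _ _)
  · simpa using compl_card S.1 (Finset.mem_powersetCard.mp S.2).2
  · simpa using compl_card T.1 (Finset.mem_powersetCard.mp T.2).2
  · ext a; simp [Finset.mem_map_equiv]
  · ext a; simp [Finset.mem_map_equiv]

/-- Supercommutativity for `d = 0`. -/
theorem stmt1 {n m k1 k2 : ℕ}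
    (f1 : (Fin n → ℚ) → ℚ) (f2 : (Fin m → ℚ) → ℚ)
    (h1 : ∀ (σ : Equiv.Perm (Fin n)) (y : Fin n → ℚ), f1 (fun i => y (σ i)) = f1 y)
    (h2 : ∀ (σ : Equiv.Perm (Fin m)) (y : Fin m → ℚ), f2 (fun i => y (σ i)) = f2 y)
    (hom1 : ∀ (c : ℚ) (y : Fin n → ℚ), f1 (fun i => c * y i) = c ^ k1 * f1 y)
    (hom2 : ∀ (c : ℚ) (y : Fin m → ℚ), f2 (fun i => c * y i) = c ^ k2 * f2 y)
    (x : Fin (n + m) → ℚ) :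
    shuffleMul 0 f1 f2 x =
      (-1 : ℚ) ^ (n * m) *
        shuffleMul 0 f2 f1 (fun i => x (finCongr (Nat.add_comm m n) i)) :=
  stmt1_general f1 f2 x

end

end Stmt1
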